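/- arXiv:1010.4487 — 2 statements merged into one kernel-verified Lean document; each statement's English description precedes it below -/
import Mathlib

section
/- Let a ∈ ℂ and 0 ≤ r₁ < s < r₂, and let f be holomorphic on the annulus A = {z ∈ ℂ : r₁ < |z − a| < r₂}. If ∮_{|z−a|=s} (z − a)^n f(z) dz = 0 for every integer n ≥ 0, then f extends holomorphically to the disk D(a, r₂): there exists g holomorphic on {z : |z − a| < r₂} with g = f on A. -/
/-!
The extension is the Cauchy integral `F z = (2πi)⁻¹ ∮_{|w-a|=s} f w / (w - z) dw`, which is
holomorphic on `D(a, s)`. For `r₁ < t < |z - a| < s`, Cauchy's formula on the annulus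
`t < |w - a| < s` gives `2πi f z = ∮_s f w / (w - z) dw - ∮_t f w / (w - z) dw`. The inner integral
vanishes: expanding `1 / (w - z)` in powers of `(w - a) / (z - a)` on `|w - a| = t`, every term
integrates to zero against `f` (the hypothesis, moved from radius `s` to `t` by Cauchy–Goursat)
and the remainder after `N` terms is `O((t / |z - a|) ^ N)`. So `F = f` on `r₁ < |z - a| < s`, and
gluing `F` on `D(a, s)` with `f` on the annulus gives the extension.
-/

open Metric Complex Set Filter Topology Real

def annulus (c : ℂ) (r R : ℝ) : Set ℂ := {z | r < ‖z - c‖ ∧ ‖z - c‖ < R}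

theorem isOpen_annulus (c : ℂ) (r R : ℝ) : IsOpen (annulus c r R) := by
  have hcont : Continuous fun z : ℂ => ‖z - c‖ := by fun_prop
  exact (isOpen_lt continuous_const hcont).inter (isOpen_lt hcont continuous_const)

theorem sphere_subset_annulus {c : ℂ} {r R t : ℝ} (hr : r < t) (hR : t < R) :
    sphere c t ⊆ annulus c r R := fun _ hz =>
  ⟨(mem_sphere_iff_norm.1 hz).symm ▸ hr, (mem_sphere_iff_norm.1 hz).symm ▸ hR⟩

theorem closedBall_diff_ball_subset_annulus {c : ℂ} {r R t t' : ℝ} (hr : r < t) (hR : t' < R) :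
    closedBall c t' \ ball c t ⊆ annulus c r R := by
  rintro z ⟨hz', hz⟩
  rw [mem_closedBall_iff_norm] at hz'
  rw [mem_ball_iff_norm, not_lt] at hz
  exact ⟨hr.trans_le hz, hz'.trans_lt hR⟩

section

variable {E : Type*} [NormedAddCommGroup E] [NormedSpace ℂ E]

theorem circleIntegral_eq_of_differentiableOn_annulus {c : ℂ} {r R t t' : ℝ} {f : ℂ → E}
    (hr : 0 ≤ r) (hf : DifferentiableOn ℂ f (annulus c r R)) (ht : t ∈ Ioo r R)
    (ht' : t' ∈ Ioo r R) : (∮ z in C(c, t), f z) = ∮ z in C(c, t'), f z := by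
  wlog htt' : t ≤ t' generalizing t t'
  · exact (this ht' ht (le_of_not_ge htt')).symm
  have hsub := closedBall_diff_ball_subset_annulus (c := c) ht.1 ht'.2
  refine (circleIntegral_eq_of_differentiable_on_annulus_off_countable (hr.trans_lt ht.1) htt'
    countable_empty (hf.continuousOn.mono hsub) fun z hz => ?_).symm
  exact hf.differentiableAt ((isOpen_annulus c r R).mem_nhds
    (hsub (sdiff_subset_sdiff ball_subset_closedBall ball_subset_closedBall hz.1)))

theorem circleIntegral_sub_inv_eq_zero_of_lt_norm {c w : ℂ} {R : ℝ} (hR : 0 ≤ R)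
    (hw : R < ‖w - c‖) : (∮ z in C(c, R), (z - w)⁻¹) = 0 := by
  have hne : ∀ z ∈ closedBall c R, z - w ≠ 0 := fun z hz hzw => by
    rw [mem_closedBall_iff_norm, sub_eq_zero.1 hzw] at hz
    exact hz.not_gt hw
  refine circleIntegral_eq_zero_of_differentiable_on_off_countable hR countable_empty
    ((continuousOn_id.sub continuousOn_const).inv₀ hne) fun z hz => ?_
  exact (differentiableAt_id.sub_const w).inv (hne z (ball_subset_closedBall hz.1))

theorem differentiableOn_cauchyIntegral [CompleteSpace E] {c : ℂ} {R : ℝ} {f : ℂ → E}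
    (hf : CircleIntegrable f c R) (hR : 0 < R) :
    DifferentiableOn ℂ (fun w => (2 * π * I : ℂ)⁻¹ • ∮ z in C(c, R), (z - w)⁻¹ • f z)
      (ball c R) := by
  lift R to NNReal using hR.le
  have := (hasFPowerSeriesOn_cauchy_integral hf hR).differentiableOn
  rwa [eball_coe] at this

theorem circleIntegral_sub_inv_smul_eq_zero_of_forall_pow_smul_eq_zero [CompleteSpace E]
    {c z : ℂ} {R : ℝ} {f : ℂ → E} (hR : 0 ≤ R) (hf : ContinuousOn f (sphere c R))
    (hz : R < ‖z - c‖) (hmom : ∀ n : ℕ, (∮ w in C(c, R), (w - c) ^ n • f w) = 0) :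
    (∮ w in C(c, R), (w - z)⁻¹ • f w) = 0 := by
  have hzc : z - c ≠ 0 := norm_pos_iff.1 (hR.trans_lt hz)
  have hdist : ∀ w ∈ sphere c R, ‖z - c‖ - R ≤ ‖w - z‖ := fun w hw => by
    rw [← mem_sphere_iff_norm.1 hw, norm_sub_rev w z, ← sub_sub_sub_cancel_right z w c]
    exact norm_sub_norm_le _ _
  have hwz : ∀ w ∈ sphere c R, w - z ≠ 0 := fun w hw =>
    norm_pos_iff.1 ((sub_pos.2 hz).trans_le (hdist w hw))
  have hcont : ContinuousOn (fun w => (w - z)⁻¹ • f w) (sphere c R) :=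
    ((continuousOn_id.sub continuousOn_const).inv₀ hwz).smul hf
  -- `((w - c) / (z - c)) ^ N • (w - z)⁻¹` is `(w - z)⁻¹` minus the first `N` terms of its
  -- expansion in powers of `w - c`, and those terms integrate to zero against `f`.
  have htail : ∀ N : ℕ, (∮ w in C(c, R), ((w - c) / (z - c)) ^ N • (w - z)⁻¹ • f w)
      = ∮ w in C(c, R), (w - z)⁻¹ • f w := by
    intro N
    induction N with
    | zero => simp only [pow_zero, one_smul]
    | succ N ih =>
      have hsplit : EqOn (fun w => ((w - c) / (z - c)) ^ (N + 1) • (w - z)⁻¹ • f w)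
          (fun w => ((w - c) / (z - c)) ^ N • (w - z)⁻¹ • f w
            + ((z - c) ^ (N + 1))⁻¹ • (w - c) ^ N • f w) (sphere c R) := fun w hw => by
        have hw_ne := hwz w hw
        simp only [smul_smul, ← add_smul, div_pow]
        congr 1
        field_simp
        ring
      rw [circleIntegral.integral_congr hR hsplit, circleIntegral.integral_add,
        circleIntegral.integral_smul, hmom, smul_zero, add_zero, ih]
      · exact ((((continuousOn_id.sub continuousOn_const).div_const _).pow N).smul
          hcont).circleIntegrable hR
      · exact (continuousOn_const.smul
          (((continuousOn_id.sub continuousOn_const).pow N).smul hf)).circleIntegrable hR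
  obtain ⟨M, hM⟩ := (isCompact_sphere c R).exists_bound_of_continuousOn hcont
  have hbound : ∀ N : ℕ,
      ‖∮ w in C(c, R), (w - z)⁻¹ • f w‖ ≤ 2 * π * R * ((R / ‖z - c‖) ^ N * M) := by
    intro N
    rw [← htail N]
    refine circleIntegral.norm_integral_le_of_norm_le_const hR fun w hw => ?_
    rw [norm_smul, norm_pow, norm_div, mem_sphere_iff_norm.1 hw]
    gcongr
    exact hM w hw
  have hlim : Tendsto (fun N : ℕ => 2 * π * R * ((R / ‖z - c‖) ^ N * M)) atTop (𝓝 0) := by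
    simpa using ((tendsto_pow_atTop_nhds_zero_of_lt_one (by positivity)
      ((div_lt_one (hR.trans_lt hz)).2 hz)).mul_const M).const_mul (2 * π * R)
  exact norm_le_zero_iff.1 (ge_of_tendsto' hlim hbound)

theorem circleIntegral_sub_inv_smul_sub_of_differentiableOn_annulus [CompleteSpace E]
    {c z : ℂ} {r R t t' : ℝ} {f : ℂ → E} (hr : 0 ≤ r) (hf : DifferentiableOn ℂ f (annulus c r R))
    (ht : r < t) (htz : t < ‖z - c‖) (hzt' : ‖z - c‖ < t') (ht' : t' < R) :
    (∮ w in C(c, t'), (w - z)⁻¹ • f w) - (∮ w in C(c, t), (w - z)⁻¹ • f w)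
      = (2 * π * I : ℂ) • f z := by
  have hz : z ∈ annulus c r R := ⟨ht.trans htz, hzt'.trans ht'⟩
  have hslope : ∀ ρ ∈ Ioo r R, ρ ≠ ‖z - c‖ → (∮ w in C(c, ρ), dslope f z w)
      = (∮ w in C(c, ρ), (w - z)⁻¹ • f w) - (∮ w in C(c, ρ), (w - z)⁻¹) • f z := by
    intro ρ hρ hρz
    have hρ0 : 0 ≤ ρ := hr.trans hρ.1.le
    have hwz : ∀ w ∈ sphere c ρ, w - z ≠ 0 := fun w hw hwz => by
      rw [mem_sphere_iff_norm, sub_eq_zero.1 hwz] at hw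
      exact hρz hw.symm
    have hinv : ContinuousOn (fun w : ℂ => (w - z)⁻¹) (sphere c ρ) :=
      (continuousOn_id.sub continuousOn_const).inv₀ hwz
    have hint : CircleIntegrable (fun w => (w - z)⁻¹ • f w) c ρ :=
      (hinv.smul (hf.continuousOn.mono (sphere_subset_annulus hρ.1 hρ.2))).circleIntegrable hρ0
    have hint' : CircleIntegrable (fun w => (w - z)⁻¹ • f z) c ρ :=
      (hinv.smul continuousOn_const).circleIntegrable hρ0
    rw [← circleIntegral.integral_smul_const, ← circleIntegral.integral_sub hint hint']
    refine circleIntegral.integral_congr hρ0 fun w hw => ?_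
    rw [dslope_of_ne f (sub_ne_zero.1 (hwz w hw)), slope_def_module, smul_sub]
  have hd : DifferentiableOn ℂ (dslope f z) (annulus c r R) :=
    (Complex.differentiableOn_dslope ((isOpen_annulus c r R).mem_nhds hz)).2 hf
  have ht_mem : t ∈ Ioo r R := ⟨ht, htz.trans (hzt'.trans ht')⟩
  have ht'_mem : t' ∈ Ioo r R := ⟨ht.trans (htz.trans hzt'), ht'⟩
  have hcauchy := circleIntegral_eq_of_differentiableOn_annulus hr hd ht'_mem ht_mem
  rw [hslope t' ht'_mem hzt'.ne', hslope t ht_mem htz.ne,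
    circleIntegral.integral_sub_inv_of_mem_ball (mem_ball_iff_norm.2 hzt'),
    circleIntegral_sub_inv_eq_zero_of_lt_norm (hr.trans ht.le) htz, zero_smul, sub_zero] at hcauchy
  rw [← hcauchy, sub_sub_cancel]

theorem two_pi_I_inv_smul_circleIntegral_sub_inv_smul_of_forall_pow_smul_eq_zero [CompleteSpace E]
    {c z : ℂ} {r R s : ℝ} {f : ℂ → E} (hr : 0 ≤ r) (hf : DifferentiableOn ℂ f (annulus c r R))
    (hs : s < R) (hmom : ∀ n : ℕ, (∮ w in C(c, s), (w - c) ^ n • f w) = 0)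
    (hz : r < ‖z - c‖) (hzs : ‖z - c‖ < s) :
    (2 * π * I : ℂ)⁻¹ • (∮ w in C(c, s), (w - z)⁻¹ • f w) = f z := by
  obtain ⟨t, hrt, htz⟩ := exists_between hz
  have hmom_t : ∀ n : ℕ, (∮ w in C(c, t), (w - c) ^ n • f w) = 0 := fun n =>
    (circleIntegral_eq_of_differentiableOn_annulus hr
      (((differentiableOn_id.sub_const c).pow n).smul hf)
      ⟨hrt, htz.trans (hzs.trans hs)⟩ ⟨hz.trans hzs, hs⟩).trans (hmom n)
  have hinner := circleIntegral_sub_inv_smul_eq_zero_of_forall_pow_smul_eq_zero (hr.trans hrt.le)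
    (hf.continuousOn.mono (sphere_subset_annulus hrt (htz.trans (hzs.trans hs)))) htz hmom_t
  have hformula := circleIntegral_sub_inv_smul_sub_of_differentiableOn_annulus hr hf hrt htz hzs hs
  rw [hinner, sub_zero] at hformula
  rw [hformula, inv_smul_smul₀ two_pi_I_ne_zero]

end

/-- a holomorphic function on an annulus whose Laurent coefficients of
nonnegative index-weight (the contour integrals `∮ (z-a)^n f dz`, `n ≥ 0`) all vanish
extends holomorphically to the full disk `D(a, r₂)`. -/
theorem extends_to_disk_of_principal_part_vanishes
    (a : ℂ) (r₁ s r₂ : ℝ) (h₁ : 0 ≤ r₁) (h₂ : r₁ < s) (h₃ : s < r₂)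
    (f : ℂ → ℂ)
    (hf : DifferentiableOn ℂ f {z : ℂ | r₁ < ‖z - a‖ ∧ ‖z - a‖ < r₂})
    (hv : ∀ n : ℕ, (∮ z in C(a, s), (z - a) ^ n * f z) = 0) :
    ∃ g : ℂ → ℂ, DifferentiableOn ℂ g (ball a r₂) ∧
      ∀ z ∈ {z : ℂ | r₁ < ‖z - a‖ ∧ ‖z - a‖ < r₂}, g z = f z := by
  set F : ℂ → ℂ := fun z => (2 * π * I : ℂ)⁻¹ • ∮ w in C(a, s), (w - z)⁻¹ • f w
  have hFf : ∀ z ∈ annulus a r₁ s, F z = f z := fun z hz =>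
    two_pi_I_inv_smul_circleIntegral_sub_inv_smul_of_forall_pow_smul_eq_zero h₁ hf h₃ hv hz.1 hz.2
  have hF : DifferentiableOn ℂ F (ball a s) := differentiableOn_cauchyIntegral
    ((hf.continuousOn.mono (sphere_subset_annulus h₂ h₃)).circleIntegrable (h₁.trans h₂.le))
    (h₁.trans_lt h₂)
  refine ⟨fun z => if r₁ < ‖z - a‖ then f z else F z, ?_, fun z hz => if_pos hz.1⟩
  refine differentiableOn_of_locally_differentiableOn fun z hz => ?_
  by_cases hzr : r₁ < ‖z - a‖
  · refine ⟨annulus a r₁ r₂, isOpen_annulus a r₁ r₂, ⟨hzr, mem_ball_iff_norm.1 hz⟩, ?_⟩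
    exact (hf.mono inter_subset_right).congr fun w hw => if_pos hw.2.1
  · refine ⟨ball a s, isOpen_ball, mem_ball_iff_norm.2 ((not_lt.1 hzr).trans_lt h₂), ?_⟩
    refine (hF.mono inter_subset_right).congr fun w hw => ?_
    split_ifs with hwr
    exacts [(hFf w ⟨hwr, mem_ball_iff_norm.1 hw.2⟩).symm, rfl]
end

section
/- Let a ∈ ℂ and 0 ≤ r₁ < r₂, and let f be holomorphic on the annulus A = {z ∈ ℂ : r₁ < |z − a| < r₂}. Then there exist a function g holomorphic on the disk {z : |z − a| < r₂} and a function h holomorphic on {z : |z − a| > r₁} with h(z) → 0 as |z| → ∞, such that f = g + h on A; moreover the pair (g, h) with these properties is unique. -/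
/-!
For `r₁ < ρ₁ < ‖z - a‖ < ρ₂ < r₂`, Cauchy's theorem on the closed annulus `ρ₁ ≤ ‖w - a‖ ≤ ρ₂`,
applied to the difference quotient `dslope f z`, gives the annular Cauchy formula
`2πi f z = ∮_{ρ₂} f w / (w - z) dw - ∮_{ρ₁} f w / (w - z) dw`.
By the same theorem the first integral does not depend on `ρ₂ > ‖z - a‖` and the second not on
`ρ₁ < ‖z - a‖`, so they define `g` on the whole disc `‖z - a‖ < r₂` and `h` on the whole exterior
`‖z - a‖ > r₁`; both are holomorphic as parametric integrals, and `h` decays like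
`1 / ‖z - a‖`. For uniqueness, `g - g'` and `h' - h` agree on the annulus, hence glue to an entire
function tending to `0` at infinity, which vanishes by Liouville's theorem.
-/

open Metric Filter Set Complex Real MeasureTheory Bornology Topology

variable {E : Type*} [NormedAddCommGroup E] [NormedSpace ℂ E]

section CircleIntegral

variable {f : ℂ → E} {c z : ℂ} {R : ℝ}

theorem exists_forall_le_norm_circleMap_sub (hz : z ∉ sphere c |R|) :
    ∃ d > 0, ∀ x ∈ ball z d, ∀ θ : ℝ, d ≤ ‖circleMap c R θ - x‖ := by
  obtain ⟨d, hd, h_disj⟩ := (disjoint_singleton_left.2 hz).exists_thickenings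
    isCompact_singleton isClosed_sphere
  rw [thickening_singleton] at h_disj
  refine ⟨d, hd, fun x hx θ => ?_⟩
  have := h_disj.subset_compl_right hx
  simp only [mem_compl_iff, mem_thickening_iff, not_lt, not_exists, not_and] at this
  simpa [← dist_eq_norm'] using this _ (circleMap_mem_sphere' c R θ)

theorem hasDerivAt_circleIntegral_sub_inv_smul (hf : CircleIntegrable f c R)
    (hz : z ∉ sphere c |R|) :
    HasDerivAt (fun z => ∮ w in C(c, R), (w - z)⁻¹ • f w)
      (∮ w in C(c, R), ((w - z) ^ 2)⁻¹ • f w) z := by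
  obtain ⟨d, hd, hdist⟩ := exists_forall_le_norm_circleMap_sub hz
  have hfm : AEStronglyMeasurable (fun θ => f (circleMap c R θ))
      (volume.restrict (uIoc 0 (2 * π))) := (intervalIntegrable_iff.1 hf).aestronglyMeasurable
  have hcont : ContinuousOn (fun w => (w - z)⁻¹) (sphere c |R|) :=
    (continuousOn_id.sub continuousOn_const).inv₀ fun w hw =>
      sub_ne_zero.2 (ne_of_mem_of_not_mem hw hz)
  refine (intervalIntegral.hasDerivAt_integral_of_dominated_loc_of_deriv_le
    (F' := fun x θ => deriv (circleMap c R) θ •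
      (((circleMap c R θ - x) ^ 2)⁻¹ • f (circleMap c R θ)))
    (bound := fun θ => (d ^ 2)⁻¹ * ‖deriv (circleMap c R) θ • f (circleMap c R θ)‖)
    (ball_mem_nhds z hd) ?meas ?int ?meas' ?bound ?int_bound ?diff).2
  case meas =>
    filter_upwards with x
    simp only [deriv_circleMap]
    exact (Measurable.aestronglyMeasurable (by fun_prop)).smul
      ((Measurable.aestronglyMeasurable (by fun_prop)).smul hfm)
  case int => exact (hf.fun_continuousOn_smul hcont).out
  case meas' =>
    simp only [deriv_circleMap]
    exact (Measurable.aestronglyMeasurable (by fun_prop)).smul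
      ((Measurable.aestronglyMeasurable (by fun_prop)).smul hfm)
  case bound =>
    filter_upwards with θ _ x hx
    rw [smul_comm, norm_smul, norm_inv, norm_pow]
    gcongr
    exact hdist x hx θ
  case int_bound => exact hf.out.norm.const_mul _
  case diff =>
    filter_upwards with θ _ x hx
    have hne : circleMap c R θ - x ≠ 0 := fun h => (hdist x hx θ).not_gt (by simpa [h] using hd)
    have hinv : HasDerivAt (fun x => (circleMap c R θ - x)⁻¹) ((circleMap c R θ - x) ^ 2)⁻¹ x := by
      simpa using ((hasDerivAt_id x).const_sub (circleMap c R θ)).fun_inv hne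
    exact (hinv.smul_const _).const_smul _

theorem norm_circleIntegral_sub_inv_smul_le (hf : CircleIntegrable f c R)
    (hz : |R| < ‖z - c‖) :
    ‖∮ w in C(c, R), (w - z)⁻¹ • f w‖ ≤
      (‖z - c‖ - |R|)⁻¹ * ∫ θ in 0..2 * π, ‖deriv (circleMap c R) θ • f (circleMap c R θ)‖ := by
  rw [← intervalIntegral.integral_const_mul]
  refine intervalIntegral.norm_integral_le_of_norm_le two_pi_pos.le
    (Eventually.of_forall fun θ _ => ?_) (hf.out.norm.const_mul _)
  have hdist : ‖z - c‖ - |R| ≤ ‖circleMap c R θ - z‖ :=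
    calc ‖z - c‖ - |R| = ‖z - c‖ - ‖circleMap c R θ - c‖ := by
          rw [circleMap_sub_center, norm_circleMap_zero]
      _ ≤ ‖(z - c) - (circleMap c R θ - c)‖ := norm_sub_norm_le _ _
      _ = ‖circleMap c R θ - z‖ := by rw [sub_sub_sub_cancel_right, norm_sub_rev]
  rw [smul_comm, norm_smul, norm_inv]
  gcongr

theorem tendsto_circleIntegral_sub_inv_smul_cobounded (hf : CircleIntegrable f c R) :
    Tendsto (fun z => ∮ w in C(c, R), (w - z)⁻¹ • f w) (cobounded ℂ) (𝓝 0) := by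
  have hnorm : Tendsto (fun z => ‖z - c‖) (cobounded ℂ) atTop := by
    simpa only [dist_eq_norm] using tendsto_dist_right_cobounded_atTop c
  have hinv : Tendsto (fun z => (‖z - c‖ - |R|)⁻¹) (cobounded ℂ) (𝓝 0) :=
    (tendsto_atTop_add_const_right _ (-|R|) hnorm).inv_tendsto_atTop
  have hbound := hinv.mul_const
    (∫ θ in 0..2 * π, ‖deriv (circleMap c R) θ • f (circleMap c R θ)‖)
  rw [zero_mul] at hbound
  refine squeeze_zero_norm' ?_ hbound
  filter_upwards [hnorm.eventually_gt_atTop |R|] with z hz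
  exact norm_circleIntegral_sub_inv_smul_le hf hz

end CircleIntegral

section Annulus

variable {f : ℂ → E} {c z : ℂ} {r R : ℝ}

theorem closedBall_diff_ball_mem_nhds (hz : z ∈ ball c R \ closedBall c r) :
    closedBall c R \ ball c r ∈ 𝓝 z :=
  mem_of_superset ((isOpen_ball.sdiff isClosed_closedBall).mem_nhds hz)
    (sdiff_subset_sdiff ball_subset_closedBall ball_subset_closedBall)

theorem circleIntegral_eq_of_differentiableOn_closedBall_diff_ball (hr : 0 < r) (hrR : r ≤ R)
    (hf : DifferentiableOn ℂ f (closedBall c R \ ball c r)) :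
    (∮ w in C(c, R), f w) = ∮ w in C(c, r), f w := by
  refine circleIntegral_eq_of_differentiable_on_annulus_off_countable hr hrR countable_empty
    hf.continuousOn fun w hw => hf.differentiableAt (closedBall_diff_ball_mem_nhds hw.1)

theorem circleIntegral_sub_inv_of_notMem_closedBall (hr : 0 ≤ r) (hz : z ∉ closedBall c r) :
    (∮ w in C(c, r), (w - z)⁻¹) = 0 := by
  refine DiffContOnCl.circleIntegral_eq_zero hr ?_
  refine ((differentiableOn_id.sub_const z).inv fun w hw => sub_ne_zero.2 ?_).diffContOnCl_ball
    subset_rfl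
  rintro rfl
  exact hz hw

variable [CompleteSpace E]

theorem circleIntegral_dslope (hr : 0 ≤ r) (hf : ContinuousOn f (sphere c r))
    (hz : z ∉ sphere c r) :
    (∮ w in C(c, r), dslope f z w) =
      (∮ w in C(c, r), (w - z)⁻¹ • f w) - (∮ w in C(c, r), (w - z)⁻¹) • f z := by
  have hinv : ContinuousOn (fun w => (w - z)⁻¹) (sphere c r) :=
    (continuousOn_id.sub continuousOn_const).inv₀ fun w hw =>
      sub_ne_zero.2 (ne_of_mem_of_not_mem hw hz)
  have h₁ : CircleIntegrable (fun w => (w - z)⁻¹ • f w) c r := (hinv.smul hf).circleIntegrable hr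
  have h₂ : CircleIntegrable (fun w => (w - z)⁻¹ • f z) c r :=
    (hinv.smul continuousOn_const).circleIntegrable hr
  rw [← circleIntegral.integral_smul_const, ← circleIntegral.integral_sub h₁ h₂]
  refine circleIntegral.integral_congr hr fun w hw => ?_
  rw [dslope_of_ne f (ne_of_mem_of_not_mem hw hz), slope_def_module, smul_sub]

theorem circleIntegral_sub_inv_smul_sub_of_mem_annulus (hr : 0 < r)
    (hf : DifferentiableOn ℂ f (closedBall c R \ ball c r)) (hz : z ∈ ball c R \ closedBall c r) :
    (∮ w in C(c, R), (w - z)⁻¹ • f w) - (∮ w in C(c, r), (w - z)⁻¹ • f w) =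
      (2 * π * I : ℂ) • f z := by
  have hrR : r ≤ R := (not_le.1 (mem_closedBall.not.1 hz.2)).le.trans (mem_ball.1 hz.1).le
  have hsphere : ∀ ρ, r ≤ ρ → ρ ≤ R → sphere c ρ ⊆ closedBall c R \ ball c r :=
    fun ρ hrρ hρR w hw => ⟨closedBall_subset_closedBall hρR (sphere_subset_closedBall hw),
      by simpa [mem_sphere.1 hw] using hrρ⟩
  have hdslope := circleIntegral_eq_of_differentiableOn_closedBall_diff_ball hr hrR
    ((differentiableOn_dslope (closedBall_diff_ball_mem_nhds hz)).2 hf)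
  rw [circleIntegral_dslope (hr.le.trans hrR) (hf.continuousOn.mono (hsphere R hrR le_rfl))
      fun h => (mem_ball.1 hz.1).ne (mem_sphere.1 h),
    circleIntegral_dslope hr.le (hf.continuousOn.mono (hsphere r le_rfl hrR))
      fun h => hz.2 (sphere_subset_closedBall h),
    circleIntegral.integral_sub_inv_of_mem_ball hz.1,
    circleIntegral_sub_inv_of_notMem_closedBall hr.le hz.2, zero_smul, sub_zero] at hdslope
  rw [← hdslope, sub_sub_cancel]

end Annulus

section Laurent

-- Any radius in `(max ‖z - c‖ r, R)`, resp. `(r, min ‖z - c‖ R)`, gives the same value on the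
-- domain of interest (`circleIntegral_sub_inv_smul_eq_of_mem_Ioo`); we fix the midpoint.
noncomputable def laurentRegularPart (f : ℂ → E) (c : ℂ) (r R : ℝ) (z : ℂ) : E :=
  (2 * π * I : ℂ)⁻¹ • ∮ w in C(c, (max ‖z - c‖ r + R) / 2), (w - z)⁻¹ • f w

noncomputable def laurentPrincipalPart (f : ℂ → E) (c : ℂ) (r R : ℝ) (z : ℂ) : E :=
  -((2 * π * I : ℂ)⁻¹ • ∮ w in C(c, (r + min ‖z - c‖ R) / 2), (w - z)⁻¹ • f w)

variable {f : ℂ → E} {c z : ℂ} {r R ρ : ℝ}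

theorem circleIntegral_sub_inv_smul_eq_of_mem_Ioo {ρ₁ ρ₂ : ℝ} (hr : 0 ≤ r)
    (hf : DifferentiableOn ℂ f (ball c R \ closedBall c r))
    (hρ₁ : ρ₁ ∈ Ioo r R) (hρ₂ : ρ₂ ∈ Ioo r R)
    (hz : z ∉ closedBall c (max ρ₁ ρ₂) \ ball c (min ρ₁ ρ₂)) :
    (∮ w in C(c, ρ₁), (w - z)⁻¹ • f w) = ∮ w in C(c, ρ₂), (w - z)⁻¹ • f w := by
  wlog hle : ρ₁ ≤ ρ₂ generalizing ρ₁ ρ₂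
  · exact (this hρ₂ hρ₁ (by rwa [max_comm, min_comm]) (le_of_not_ge hle)).symm
  rw [max_eq_right hle, min_eq_left hle] at hz
  refine (circleIntegral_eq_of_differentiableOn_closedBall_diff_ball (hr.trans_lt hρ₁.1) hle
    ?_).symm
  refine DifferentiableOn.smul ?_ (hf.mono (sdiff_subset_sdiff (closedBall_subset_ball hρ₂.2)
    (closedBall_subset_ball hρ₁.1)))
  exact (differentiableOn_id.sub_const z).inv fun w hw => sub_ne_zero.2 (ne_of_mem_of_not_mem hw hz)

theorem laurentRegularPart_eq (hr : 0 ≤ r) (hf : DifferentiableOn ℂ f (ball c R \ closedBall c r))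
    (hρ : ρ ∈ Ioo r R) (hz : ‖z - c‖ < ρ) :
    laurentRegularPart f c r R z = (2 * π * I : ℂ)⁻¹ • ∮ w in C(c, ρ), (w - z)⁻¹ • f w := by
  have hmax : max ‖z - c‖ r < R := max_lt (hz.trans hρ.2) (hρ.1.trans hρ.2)
  have hz' : ‖z - c‖ < (max ‖z - c‖ r + R) / 2 := by linarith [le_max_left ‖z - c‖ r]
  rw [laurentRegularPart, circleIntegral_sub_inv_smul_eq_of_mem_Ioo hr hf
    ⟨by linarith [le_max_right ‖z - c‖ r], by linarith⟩ hρ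
    fun h => h.2 (mem_ball_iff_norm.2 (lt_min hz' hz))]

theorem laurentPrincipalPart_eq (hr : 0 ≤ r)
    (hf : DifferentiableOn ℂ f (ball c R \ closedBall c r))
    (hρ : ρ ∈ Ioo r R) (hz : ρ < ‖z - c‖) :
    laurentPrincipalPart f c r R z = -((2 * π * I : ℂ)⁻¹ • ∮ w in C(c, ρ), (w - z)⁻¹ • f w) := by
  have hmin : r < min ‖z - c‖ R := lt_min (hρ.1.trans hz) (hρ.1.trans hρ.2)
  have hz' : (r + min ‖z - c‖ R) / 2 < ‖z - c‖ := by linarith [min_le_left ‖z - c‖ R]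
  rw [laurentPrincipalPart, circleIntegral_sub_inv_smul_eq_of_mem_Ioo hr hf
    ⟨by linarith, by linarith [min_le_right ‖z - c‖ R]⟩ hρ
    fun h => (max_lt hz' hz).not_ge (mem_closedBall_iff_norm.1 h.1)]

theorem circleIntegrable_of_mem_Ioo (hr : 0 ≤ r)
    (hf : DifferentiableOn ℂ f (ball c R \ closedBall c r)) (hρ : ρ ∈ Ioo r R) :
    CircleIntegrable f c ρ := by
  refine (hf.continuousOn.mono fun w hw => ?_).circleIntegrable (hr.trans hρ.1.le)
  rw [mem_sphere] at hw
  exact ⟨mem_ball.2 (hw ▸ hρ.2), fun h => (mem_closedBall.1 h).not_gt (hw ▸ hρ.1)⟩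

theorem differentiableOn_laurentRegularPart (hr : 0 ≤ r)
    (hf : DifferentiableOn ℂ f (ball c R \ closedBall c r)) (hrR : r < R) :
    DifferentiableOn ℂ (laurentRegularPart f c r R) (ball c R) := by
  intro z hz
  rw [mem_ball_iff_norm] at hz
  obtain ⟨ρ, hmax, hρR⟩ := exists_between (max_lt hz hrR)
  have hρ : ρ ∈ Ioo r R := ⟨(le_max_right _ _).trans_lt hmax, hρR⟩
  have hzρ : ‖z - c‖ < ρ := (le_max_left _ _).trans_lt hmax
  have hderiv := hasDerivAt_circleIntegral_sub_inv_smul (circleIntegrable_of_mem_Ioo hr hf hρ)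
    (z := z) (by simpa [abs_of_pos (hr.trans_lt hρ.1), mem_sphere_iff_norm] using hzρ.ne)
  refine ((hderiv.const_smul (2 * π * I : ℂ)⁻¹).differentiableAt.congr_of_eventuallyEq
    ?_).differentiableWithinAt
  filter_upwards [isOpen_ball.mem_nhds (mem_ball_iff_norm.2 hzρ)] with w hw
  exact laurentRegularPart_eq hr hf hρ (mem_ball_iff_norm.1 hw)

theorem differentiableOn_laurentPrincipalPart (hr : 0 ≤ r)
    (hf : DifferentiableOn ℂ f (ball c R \ closedBall c r)) (hrR : r < R) :
    DifferentiableOn ℂ (laurentPrincipalPart f c r R) (closedBall c r)ᶜ := by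
  intro z hz
  rw [mem_compl_iff, mem_closedBall_iff_norm, not_le] at hz
  obtain ⟨ρ, hrρ, hmin⟩ := exists_between (lt_min hz hrR)
  have hρ : ρ ∈ Ioo r R := ⟨hrρ, hmin.trans_le (min_le_right _ _)⟩
  have hzρ : ρ < ‖z - c‖ := hmin.trans_le (min_le_left _ _)
  have hderiv := hasDerivAt_circleIntegral_sub_inv_smul (circleIntegrable_of_mem_Ioo hr hf hρ)
    (z := z) (by simpa [abs_of_pos (hr.trans_lt hρ.1), mem_sphere_iff_norm] using hzρ.ne')
  refine ((hderiv.const_smul (2 * π * I : ℂ)⁻¹).neg.differentiableAt.congr_of_eventuallyEq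
    ?_).differentiableWithinAt
  filter_upwards [isClosed_closedBall.isOpen_compl.mem_nhds
    (show z ∈ (closedBall c ρ)ᶜ by simpa only [mem_compl_iff, mem_closedBall_iff_norm, not_le])]
    with w hw
  exact laurentPrincipalPart_eq hr hf hρ
    (by simpa only [mem_compl_iff, mem_closedBall_iff_norm, not_le] using hw)

theorem tendsto_laurentPrincipalPart_cobounded (hr : 0 ≤ r)
    (hf : DifferentiableOn ℂ f (ball c R \ closedBall c r)) (hrR : r < R) :
    Tendsto (laurentPrincipalPart f c r R) (cobounded ℂ) (𝓝 0) := by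
  have hρ : (r + R) / 2 ∈ Ioo r R := ⟨by linarith, by linarith⟩
  have hlim := ((tendsto_circleIntegral_sub_inv_smul_cobounded
    (circleIntegrable_of_mem_Ioo hr hf hρ)).const_smul (2 * π * I : ℂ)⁻¹).neg
  rw [smul_zero, neg_zero] at hlim
  refine hlim.congr' ?_
  filter_upwards [isBounded_def.1 (isBounded_closedBall (x := c) (r := (r + R) / 2))] with z hz
  exact (laurentPrincipalPart_eq hr hf hρ
    (by simpa only [mem_compl_iff, mem_closedBall_iff_norm, not_le] using hz)).symm

theorem laurentRegularPart_add_laurentPrincipalPart [CompleteSpace E] (hr : 0 ≤ r)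
    (hf : DifferentiableOn ℂ f (ball c R \ closedBall c r)) (hz : z ∈ ball c R \ closedBall c r) :
    laurentRegularPart f c r R z + laurentPrincipalPart f c r R z = f z := by
  have hzR : ‖z - c‖ < R := mem_ball_iff_norm.1 hz.1
  have hrz : r < ‖z - c‖ := not_le.1 (mem_closedBall_iff_norm.not.1 hz.2)
  have hcauchy := circleIntegral_sub_inv_smul_sub_of_mem_annulus (c := c) (z := z)
    (r := (r + ‖z - c‖) / 2) (R := (‖z - c‖ + R) / 2) (f := f) (by linarith)
    (hf.mono (sdiff_subset_sdiff (closedBall_subset_ball (by linarith))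
      (closedBall_subset_ball (by linarith))))
    ⟨mem_ball_iff_norm.2 (by linarith), fun h => (mem_closedBall_iff_norm.1 h).not_gt (by linarith)⟩
  rw [laurentRegularPart, laurentPrincipalPart, max_eq_left hrz.le, min_eq_left hzR.le,
    ← sub_eq_add_neg, ← smul_sub, hcauchy, inv_smul_smul₀ two_pi_I_ne_zero]

end Laurent

theorem eqOn_zero_of_eqOn_ball_diff_closedBall [CompleteSpace E] {g h : ℂ → E} {c : ℂ} {r R : ℝ}
    (hrR : r < R) (hg : DifferentiableOn ℂ g (ball c R))
    (hh : DifferentiableOn ℂ h (closedBall c r)ᶜ) (hgh : EqOn g h (ball c R \ closedBall c r))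
    (hlim : Tendsto h (cobounded ℂ) (𝓝 0)) :
    EqOn g 0 (ball c R) ∧ EqOn h 0 (closedBall c r)ᶜ := by
  classical
  set F := (ball c R).piecewise g h
  have hFg : EqOn F g (ball c R) := piecewise_eqOn _ _ _
  have hFh : EqOn F h (closedBall c r)ᶜ := fun w hw => by
    by_cases hwR : w ∈ ball c R
    · rw [hFg hwR, hgh ⟨hwR, hw⟩]
    · exact piecewise_eq_of_notMem _ _ _ hwR
  have hF : Differentiable ℂ F := fun z => by
    by_cases hz : z ∈ ball c R
    · exact (hg.differentiableAt (isOpen_ball.mem_nhds hz)).congr_of_eventuallyEq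
        (eventually_of_mem (isOpen_ball.mem_nhds hz) hFg)
    · have hz' : z ∈ (closedBall c r)ᶜ := fun h => hz (closedBall_subset_ball hrR h)
      have hnhds := isClosed_closedBall.isOpen_compl.mem_nhds hz'
      exact (hh.differentiableAt hnhds).congr_of_eventuallyEq (eventually_of_mem hnhds hFh)
  have hF0 : ∀ z, F z = 0 := fun z => hF.apply_eq_of_tendsto_cocompact z <| by
    rw [← cobounded_eq_cocompact]
    exact hlim.congr' (eventually_of_mem (isBounded_def.1 isBounded_closedBall)
      fun w hw => (hFh hw).symm)
  exact ⟨fun z hz => (hFg hz).symm.trans (hF0 z), fun z hz => (hFh hz).symm.trans (hF0 z)⟩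

/-- Laurent decomposition `f = g + h` of a holomorphic function on an
annulus, with `g` holomorphic on the inner disk, `h` holomorphic outside the inner
circle and tending to `0` at infinity; the pair `(g, h)` is unique (as functions on
those domains). -/
theorem laurent_decomposition
    (a : ℂ) (r₁ r₂ : ℝ) (h₁ : 0 ≤ r₁) (h₂ : r₁ < r₂)
    (f : ℂ → ℂ)
    (hf : DifferentiableOn ℂ f {z : ℂ | r₁ < ‖z - a‖ ∧ ‖z - a‖ < r₂}) :
    ∃ g h : ℂ → ℂ,
      (DifferentiableOn ℂ g (ball a r₂) ∧
       DifferentiableOn ℂ h {z : ℂ | r₁ < ‖z - a‖} ∧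
       Tendsto h (Bornology.cobounded ℂ) (nhds 0) ∧
       ∀ z ∈ {z : ℂ | r₁ < ‖z - a‖ ∧ ‖z - a‖ < r₂}, f z = g z + h z) ∧
      ∀ g' h' : ℂ → ℂ,
        (DifferentiableOn ℂ g' (ball a r₂) ∧
         DifferentiableOn ℂ h' {z : ℂ | r₁ < ‖z - a‖} ∧
         Tendsto h' (Bornology.cobounded ℂ) (nhds 0) ∧
         ∀ z ∈ {z : ℂ | r₁ < ‖z - a‖ ∧ ‖z - a‖ < r₂}, f z = g' z + h' z) →
        Set.EqOn g g' (ball a r₂) ∧ Set.EqOn h h' {z : ℂ | r₁ < ‖z - a‖} := by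
  have hA : {z : ℂ | r₁ < ‖z - a‖ ∧ ‖z - a‖ < r₂} = ball a r₂ \ closedBall a r₁ := by
    ext z; simp [and_comm, dist_eq_norm]
  have hB : {z : ℂ | r₁ < ‖z - a‖} = (closedBall a r₁)ᶜ := by
    ext z; simp [dist_eq_norm]
  rw [hA] at hf
  rw [hA, hB]
  have hg := differentiableOn_laurentRegularPart h₁ hf h₂
  have hh := differentiableOn_laurentPrincipalPart h₁ hf h₂
  have hlim := tendsto_laurentPrincipalPart_cobounded h₁ hf h₂
  have hfgh := fun z (hz : z ∈ ball a r₂ \ closedBall a r₁) =>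
    (laurentRegularPart_add_laurentPrincipalPart h₁ hf hz).symm
  refine ⟨_, _, ⟨hg, hh, hlim, hfgh⟩, fun g' h' ⟨hg', hh', hlim', hfgh'⟩ => ?_⟩
  obtain ⟨hg0, hh0⟩ := eqOn_zero_of_eqOn_ball_diff_closedBall h₂ (hg.sub hg') (hh'.sub hh)
    (fun z hz => by simp only [Pi.sub_apply]; linear_combination hfgh' z hz - hfgh z hz)
    (by rw [← sub_zero (0 : ℂ)]; exact hlim'.sub hlim)
  exact ⟨fun z hz => sub_eq_zero.1 (hg0 hz), fun z hz => (sub_eq_zero.1 (hh0 hz)).symm⟩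
end
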